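/- arXiv:2006.08279 — 4 statements merged into one kernel-verified Lean document; each statement's English description precedes it below -/
import Mathlib

section
/- Let κ := sup_{u ∈ H¹(ℝ²), ‖u‖_{H¹} ≤ 1} ∫_{ℝ²} (e^{4π|u|²} − 1) dx, which is finite. Then for every u ∈ H¹(ℝ²) with ‖∇u‖_{L²} < 1 one has ∫_{ℝ²} (e^{4π|u|²} − 1) dx ≤ κ · ‖u‖²_{L²} / (1 − ‖∇u‖²_{L²}). -/
open MeasureTheory Real Filter
open scoped Topology ENNReal

noncomputable section

abbrev E2 : Type := EuclideanSpace ℝ (Fin 2)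

/-- Squared `L²` norm. -/
def l2Sq (u : E2 → ℂ) : ℝ := ∫ x : E2, ‖u x‖ ^ 2

/-- Squared `L²` norm of the gradient. -/
def gradSq (u : E2 → ℂ) : ℝ := ∫ x : E2, ‖fderiv ℝ u x‖ ^ 2

/-- Membership in `H¹(ℝ²)`. -/
def MemH1 (u : E2 → ℂ) : Prop :=
  MemLp u 2 volume ∧ Differentiable ℝ u ∧ MemLp (fun x => fderiv ℝ u x) 2 volume

/-- Integrability of all exponentials `e^{a|u|²} - 1`. -/
def ExpIntegrable (u : E2 → ℂ) : Prop :=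
  ∀ a : ℝ, 0 < a → Integrable (fun x : E2 => Real.exp (a * ‖u x‖ ^ 2) - 1)

/-- The nonlinearity `f_μ`. -/
def fmu (μ : ℝ) (z : ℂ) : ℂ :=
  ((Real.exp (4 * π * ‖z‖ ^ 2) - 1 - 4 * π * μ * ‖z‖ ^ 2 : ℝ) : ℂ) * z

/-- The potential `F_μ`. -/
def Fmu (μ : ℝ) (z : ℂ) : ℝ :=
  (Real.exp (4 * π * ‖z‖ ^ 2) - 1 - 4 * π * ‖z‖ ^ 2 - 8 * π ^ 2 * μ * ‖z‖ ^ 4) / (8 * π)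

/-- `Re (z̄ f_μ(z))`. -/
def nlDensity (μ : ℝ) (z : ℂ) : ℝ :=
  (Real.exp (4 * π * ‖z‖ ^ 2) - 1 - 4 * π * μ * ‖z‖ ^ 2) * ‖z‖ ^ 2

/-- Energy. -/
def Emu (μ : ℝ) (u : E2 → ℂ) : ℝ := gradSq u / 2 - ∫ x : E2, Fmu μ (u x)

/-- Action. -/
def Smu (μ : ℝ) (u : E2 → ℂ) : ℝ := Emu μ u + l2Sq u / 2

/-- The functional `P_μ`. -/
def Pmu (μ : ℝ) (u : E2 → ℂ) : ℝ := l2Sq u / 2 - ∫ x : E2, Fmu μ (u x)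

/-- The virial functional `I_μ`. -/
def Imu (μ : ℝ) (u : E2 → ℂ) : ℝ :=
  gradSq u - ∫ x : E2, (nlDensity μ (u x) - 2 * Fmu μ (u x))

/-- Laplacian on `ℝ²` (sum of second directional derivatives). -/
def lap (v : E2 → ℂ) (x : E2) : ℂ :=
  ∑ i : Fin 2, fderiv ℝ (fun y => fderiv ℝ v y (EuclideanSpace.single i 1)) x
      (EuclideanSpace.single i 1)

/-- `φ` is a (pointwise) solution to the elliptic equation `-Δφ + φ = f_μ(φ)`. -/
def IsEllipticSolution (μ : ℝ) (φ : E2 → ℂ) : Prop :=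
  ∀ x, -lap φ x + φ x = fmu μ (φ x)

/-- Ground state for `-ΔQ + Q = f_μ(Q)`. -/
structure IsGroundState (μ : ℝ) (Q : E2 → ℂ) : Prop where
  mem : MemH1 Q
  expint : ExpIntegrable Q
  nonzero : ¬ Q =ᵐ[volume] (0 : E2 → ℂ)
  radial : ∀ x y : E2, ‖x‖ = ‖y‖ → Q x = Q y
  solves : IsEllipticSolution μ Q
  minimal : ∀ φ : E2 → ℂ, MemH1 φ → ExpIntegrable φ → ¬ φ =ᵐ[volume] (0 : E2 → ℂ) →
    IsEllipticSolution μ φ → Smu μ Q ≤ Smu μ φ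
  grad_pos : 0 < gradSq Q
  grad_lt_one : gradSq Q < 1

/-! Dilating `u` to `u (x / c)` leaves `‖∇u‖₂` unchanged in dimension two, while it multiplies
both `‖u‖₂²` and `∫ (e^{4π|u|²} - 1)` by `c²`. With `c² = (1 - ‖∇u‖₂²) / ‖u‖₂²` the dilate lies
in the unit ball of `H¹`, so `c² ∫ (e^{4π|u|²} - 1) ≤ κ`. -/

theorem MeasureTheory.MemLp.comp_smul {E F : Type*} [NormedAddCommGroup E] [NormedSpace ℝ E]
    [MeasurableSpace E] [BorelSpace E] [FiniteDimensional ℝ E] {μ : Measure E}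
    [μ.IsAddHaarMeasure] [NormedAddCommGroup F] {p : ℝ≥0∞} {f : E → F} (hf : MemLp f p μ)
    {R : ℝ} (hR : R ≠ 0) : MemLp (fun x => f (R • x)) p μ := by
  have hemb : MeasurableEmbedding (R • · : E → E) :=
    (Homeomorph.smul (Units.mk0 R hR)).toMeasurableEquiv.measurableEmbedding
  refine hemb.memLp_map_measure_iff.mp ?_
  rw [Measure.map_addHaar_smul μ hR]
  exact hf.smul_measure ENNReal.ofReal_ne_top

theorem integral_comp_inv_smul_E2 (f : E2 → ℝ) {c : ℝ} (hc : 0 ≤ c) :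
    ∫ x : E2, f (c⁻¹ • x) = c ^ 2 * ∫ x : E2, f x := by
  simpa [finrank_euclideanSpace_fin] using Measure.integral_comp_inv_smul_of_nonneg volume f hc

section Dilation

variable {c : ℝ}

theorem l2Sq_comp_inv_smul (u : E2 → ℂ) (hc : 0 ≤ c) :
    l2Sq (fun x => u (c⁻¹ • x)) = c ^ 2 * l2Sq u :=
  integral_comp_inv_smul_E2 (fun y => ‖u y‖ ^ 2) hc

theorem gradSq_comp_inv_smul (u : E2 → ℂ) (hc : 0 < c) :
    gradSq (fun x => u (c⁻¹ • x)) = gradSq u := by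
  have hnorm (x : E2) : ‖fderiv ℝ (fun y => u (c⁻¹ • y)) x‖ ^ 2
      = c⁻¹ ^ 2 * ‖fderiv ℝ u (c⁻¹ • x)‖ ^ 2 := by
    rw [fderiv_comp_smul, norm_smul, mul_pow, Real.norm_of_nonneg (inv_nonneg.2 hc.le)]
  simp only [gradSq, hnorm, integral_const_mul]
  rw [integral_comp_inv_smul_E2 (fun y => ‖fderiv ℝ u y‖ ^ 2) hc.le, ← mul_assoc, ← mul_pow,
    inv_mul_cancel₀ hc.ne', one_pow, one_mul]

theorem integral_exp_sub_one_comp_inv_smul (u : E2 → ℂ) (hc : 0 ≤ c) :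
    ∫ x : E2, (Real.exp (4 * π * ‖u (c⁻¹ • x)‖ ^ 2) - 1)
      = c ^ 2 * ∫ x : E2, (Real.exp (4 * π * ‖u x‖ ^ 2) - 1) :=
  integral_comp_inv_smul_E2 (fun y => Real.exp (4 * π * ‖u y‖ ^ 2) - 1) hc

theorem MemH1.comp_inv_smul {u : E2 → ℂ} (hu : MemH1 u) (hc : c ≠ 0) :
    MemH1 (fun x => u (c⁻¹ • x)) := by
  obtain ⟨hL2, hdiff, hgrad⟩ := hu
  refine ⟨hL2.comp_smul (inv_ne_zero hc), hdiff.comp (differentiable_id.const_smul c⁻¹), ?_⟩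
  simp only [fderiv_comp_smul]
  exact (hgrad.comp_smul (inv_ne_zero hc)).const_smul c⁻¹

end Dilation

theorem integral_exp_sub_one_eq_zero_of_l2Sq_eq_zero {u : E2 → ℂ} (hu : MemLp u 2 volume)
    (h : l2Sq u = 0) : ∫ x : E2, (Real.exp (4 * π * ‖u x‖ ^ 2) - 1) = 0 := by
  have hint : Integrable (fun x : E2 => ‖u x‖ ^ 2) := hu.integrable_norm_pow two_ne_zero
  have hzero : (fun x : E2 => ‖u x‖ ^ 2) =ᵐ[volume] 0 :=
    (integral_eq_zero_iff_of_nonneg (fun _ => sq_nonneg _) hint).mp h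
  rw [integral_congr_ae (g := fun _ => 0) (hzero.mono fun x hx => by simp_all), integral_zero]

theorem mul_integral_exp_sub_one_le {κ : ℝ}
    (hκ : ∀ v : E2 → ℂ, MemH1 v → l2Sq v + gradSq v ≤ 1 →
      ∫ x : E2, (Real.exp (4 * π * ‖v x‖ ^ 2) - 1) ≤ κ)
    {u : E2 → ℂ} (hu : MemH1 u) {t : ℝ} (ht : 0 < t) (htu : t * l2Sq u + gradSq u ≤ 1) :
    t * ∫ x : E2, (Real.exp (4 * π * ‖u x‖ ^ 2) - 1) ≤ κ := by
  have hc : 0 < √t := Real.sqrt_pos.2 ht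
  have hsq : √t ^ 2 = t := Real.sq_sqrt ht.le
  have hdilate := hκ _ (hu.comp_inv_smul hc.ne')
    (by rwa [l2Sq_comp_inv_smul u hc.le, gradSq_comp_inv_smul u hc, hsq])
  rwa [integral_exp_sub_one_comp_inv_smul u hc.le, hsq] at hdilate

/-- the refined Moser–Trudinger inequality with the sharp constant `κ`,
where `κ` is the (finite) supremum of `∫ (e^{4π|u|²} - 1)` over the unit ball of `H¹(ℝ²)`. -/
theorem refined_moser_trudinger (κ : ℝ)
    (hκ : IsLUB {r : ℝ | ∃ u : E2 → ℂ, MemH1 u ∧ l2Sq u + gradSq u ≤ 1 ∧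
        r = ∫ x : E2, (Real.exp (4 * π * ‖u x‖ ^ 2) - 1)} κ)
    (u : E2 → ℂ) (hu : MemH1 u) (hgrad : Real.sqrt (gradSq u) < 1) :
    (∫ x : E2, (Real.exp (4 * π * ‖u x‖ ^ 2) - 1)) ≤ κ * l2Sq u / (1 - gradSq u) := by
  have hg : gradSq u < 1 := by simpa using (Real.sqrt_lt' one_pos).1 hgrad
  have hL : 0 ≤ l2Sq u := integral_nonneg fun _ => sq_nonneg _
  rcases hL.eq_or_lt with hL | hL
  · rw [integral_exp_sub_one_eq_zero_of_l2Sq_eq_zero hu.1 hL.symm, ← hL, mul_zero, zero_div]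
  have hbound := mul_integral_exp_sub_one_le (fun v hv hle => hκ.1 ⟨v, hv, hle, rfl⟩) hu
    (t := (1 - gradSq u) / l2Sq u) (div_pos (sub_pos.2 hg) hL)
    (by rw [div_mul_cancel₀ _ hL.ne']; linarith)
  rw [div_mul_eq_mul_div, div_le_iff₀ hL] at hbound
  rw [le_div_iff₀ (sub_pos.2 hg)]
  linarith
end
end

section
/- Let μ ∈ {0,1} and let u₀ ∈ 𝒜⁺_μ, i.e. u₀ ∈ H¹(ℝ²)∖{0} with S_μ(u₀) < S_μ(Q_μ) and P_μ(u₀) > 0. Then the corresponding maximal solution of the focusing NLS i∂_t u + Δu = −f_μ(u), u(0) = u₀, exists globally in time. -/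
open MeasureTheory Real Filter
open scoped Topology ENNReal

noncomputable section

/-!
The action `S_μ = E_μ + ½‖·‖²` is conserved along the flow, so `S_μ(u(t)) < S_μ(Q_μ)`. Since
`S_μ(Q_μ)` is the least action on `{P_μ = 0}`, the continuous function `t ↦ P_μ(u(t))` never
vanishes and therefore stays positive. From `S_μ = ½‖∇·‖² + P_μ` and `S_μ(Q_μ) = ½‖∇Q_μ‖²` we get
`‖∇u(t)‖² < ‖∇Q_μ‖² < 1` for all `t < T*`, which contradicts the blow-up alternative.
-/

theorem IsPreconnected.pos_of_ne_zero {α : Type*} [TopologicalSpace α] {s : Set α}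
    {f : α → ℝ} (hs : IsPreconnected s) (hf : ContinuousOn f s) (hf0 : ∀ x ∈ s, f x ≠ 0)
    {a : α} (ha : a ∈ s) (hfa : 0 < f a) {x : α} (hx : x ∈ s) : 0 < f x := by
  by_contra! hfx
  obtain ⟨y, hy, hfy⟩ := hs.intermediate_value hx ha hf ⟨hfx, hfa.le⟩
  exact hf0 y hy hfy

theorem isPreconnected_setOf_nonneg_ofReal_lt (T : ℝ≥0∞) :
    IsPreconnected {t : ℝ | 0 ≤ t ∧ ENNReal.ofReal t < T} :=
  Set.OrdConnected.isPreconnected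
    ⟨fun _ hx _ hy _ hz => ⟨hx.1.trans hz.1, (ENNReal.ofReal_le_ofReal hz.2).trans_lt hy.2⟩⟩

theorem limsup_nhdsLT_le {f : ℝ → ℝ} {a b c m : ℝ} (hab : a < b) (hm : ∀ x, m ≤ f x)
    (hf : ∀ x ∈ Set.Ioo a b, f x ≤ c) : limsup f (𝓝[<] b) ≤ c :=
  limsup_le_of_le (isCoboundedUnder_le_of_le _ hm)
    (eventually_of_mem (Ioo_mem_nhdsLT hab) hf)

theorem Smu_eq_gradSq_add_Pmu (μ : ℝ) (v : E2 → ℂ) : Smu μ v = gradSq v / 2 + Pmu μ v := by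
  unfold Smu Emu Pmu
  ring

theorem Smu_eq_of_l2Sq_eq_of_Emu_eq {μ : ℝ} {v w : E2 → ℂ} (hl2 : l2Sq v = l2Sq w)
    (hE : Emu μ v = Emu μ w) : Smu μ v = Smu μ w := by
  rw [Smu, Smu, hl2, hE]

theorem gradSq_lt_of_Smu_lt {μ : ℝ} {v Q : E2 → ℂ} (hSQ : Smu μ Q = gradSq Q / 2)
    (hS : Smu μ v < Smu μ Q) (hP : 0 < Pmu μ v) : gradSq v < gradSq Q := by
  rw [Smu_eq_gradSq_add_Pmu] at hS
  linarith

theorem global_existence_Aplus_general (μ : ℝ)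
    -- the ground state `Q_μ` and its properties
    (Q : E2 → ℂ) (hQ : IsGroundState μ Q)
    (hSQ : Smu μ Q = gradSq Q / 2)
    (hPchar : IsLeast {s : ℝ | ∃ φ : E2 → ℂ, MemH1 φ ∧ ExpIntegrable φ ∧
        ¬ φ =ᵐ[volume] (0 : E2 → ℂ) ∧ Pmu μ φ = 0 ∧ s = Smu μ φ} (Smu μ Q))
    -- the initial datum `u₀ ∈ 𝒜⁺_μ`
    (u₀ : E2 → ℂ)
    (h₀S : Smu μ u₀ < Smu μ Q) (h₀P : 0 < Pmu μ u₀)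
    -- the maximal solution on `[0, T*)`
    (Tstar : ℝ≥0∞) (hT : 0 < Tstar) (u : ℝ → E2 → ℂ) (hu0 : u 0 = u₀)
    (hmem : ∀ t : ℝ, 0 ≤ t → ENNReal.ofReal t < Tstar →
      MemH1 (u t) ∧ ExpIntegrable (u t) ∧ ¬ u t =ᵐ[volume] (0 : E2 → ℂ))
    (hmass : ∀ t : ℝ, 0 ≤ t → ENNReal.ofReal t < Tstar → l2Sq (u t) = l2Sq u₀)
    (henergy : ∀ t : ℝ, 0 ≤ t → ENNReal.ofReal t < Tstar → Emu μ (u t) = Emu μ u₀)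
    -- continuity of the flow in `H¹`
    (hcontP : ContinuousOn (fun t => Pmu μ (u t))
      {t : ℝ | 0 ≤ t ∧ ENNReal.ofReal t < Tstar})
    -- the blow-up alternative
    (halt : Tstar ≠ ⊤ →
      Filter.limsup (fun t => Real.sqrt (gradSq (u t))) (𝓝[<] Tstar.toReal) = 1) :
    Tstar = ⊤ := by
  by_contra hT_ne_top
  set I := {t : ℝ | 0 ≤ t ∧ ENNReal.ofReal t < Tstar}
  have hS : ∀ t ∈ I, Smu μ (u t) < Smu μ Q := fun t ht => by
    rwa [Smu_eq_of_l2Sq_eq_of_Emu_eq (hmass t ht.1 ht.2) (henergy t ht.1 ht.2)]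
  have hP_ne : ∀ t ∈ I, Pmu μ (u t) ≠ 0 := by
    intro t ht hPt
    obtain ⟨hH1, hexp, hne⟩ := hmem t ht.1 ht.2
    exact (hS t ht).not_ge (hPchar.2 ⟨u t, hH1, hexp, hne, hPt, rfl⟩)
  have h0I : (0 : ℝ) ∈ I := ⟨le_rfl, by simpa using hT⟩
  have hgrad : ∀ t ∈ I, gradSq (u t) < gradSq Q := fun t ht =>
    gradSq_lt_of_Smu_lt hSQ (hS t ht) <|
      (isPreconnected_setOf_nonneg_ofReal_lt Tstar).pos_of_ne_zero hcontP hP_ne h0I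
        (hu0 ▸ h₀P) ht
  have hlimsup : limsup (fun t => √(gradSq (u t))) (𝓝[<] Tstar.toReal) ≤ √(gradSq Q) :=
    limsup_nhdsLT_le (ENNReal.toReal_pos hT.ne' hT_ne_top) (fun _ => Real.sqrt_nonneg _)
      fun t ht => Real.sqrt_le_sqrt <| (hgrad t
        ⟨ht.1.le, (ENNReal.ofReal_lt_iff_lt_toReal ht.1.le hT_ne_top).2 ht.2⟩).le
  rw [halt hT_ne_top, Real.one_le_sqrt] at hlimsup
  exact hlimsup.not_gt hQ.grad_lt_one

/-- global existence for data in `𝒜⁺_μ`. If `u₀ ∈ H¹∖{0}` satisfies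
`S_μ(u₀) < S_μ(Q_μ)` and `P_μ(u₀) > 0`, then the maximal solution of the focusing NLS
`i∂ₜu + Δu = -f_μ(u)`, `u(0) = u₀` is global: `T* = ∞`. -/
theorem global_existence_Aplus (μ : ℝ) (hμ : μ = 0 ∨ μ = 1)
    -- the ground state `Q_μ` and its properties
    (Q : E2 → ℂ) (hQ : IsGroundState μ Q)
    (hSQ : Smu μ Q = gradSq Q / 2) (hPQ : Pmu μ Q = 0)
    (hPchar : IsLeast {s : ℝ | ∃ φ : E2 → ℂ, MemH1 φ ∧ ExpIntegrable φ ∧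
        ¬ φ =ᵐ[volume] (0 : E2 → ℂ) ∧ Pmu μ φ = 0 ∧ s = Smu μ φ} (Smu μ Q))
    -- the initial datum `u₀ ∈ 𝒜⁺_μ`
    (u₀ : E2 → ℂ) (h₀mem : MemH1 u₀) (h₀exp : ExpIntegrable u₀)
    (h₀ne : ¬ u₀ =ᵐ[volume] (0 : E2 → ℂ))
    (h₀S : Smu μ u₀ < Smu μ Q) (h₀P : 0 < Pmu μ u₀)
    -- the maximal solution on `[0, T*)`
    (Tstar : ℝ≥0∞) (hT : 0 < Tstar) (u : ℝ → E2 → ℂ) (hu0 : u 0 = u₀)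
    (hmem : ∀ t : ℝ, 0 ≤ t → ENNReal.ofReal t < Tstar →
      MemH1 (u t) ∧ ExpIntegrable (u t) ∧ ¬ u t =ᵐ[volume] (0 : E2 → ℂ))
    (hsol : ∀ t : ℝ, 0 ≤ t → ENNReal.ofReal t < Tstar → ∀ x : E2,
      Complex.I * deriv (fun s => u s x) t + lap (u t) x = -(fmu μ (u t x)))
    (hmass : ∀ t : ℝ, 0 ≤ t → ENNReal.ofReal t < Tstar → l2Sq (u t) = l2Sq u₀)
    (henergy : ∀ t : ℝ, 0 ≤ t → ENNReal.ofReal t < Tstar → Emu μ (u t) = Emu μ u₀)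
    -- continuity of the flow in `H¹`
    (hcontg : ContinuousOn (fun t => gradSq (u t))
      {t : ℝ | 0 ≤ t ∧ ENNReal.ofReal t < Tstar})
    (hcontP : ContinuousOn (fun t => Pmu μ (u t))
      {t : ℝ | 0 ≤ t ∧ ENNReal.ofReal t < Tstar})
    -- the blow-up alternative
    (halt : Tstar ≠ ⊤ →
      Filter.limsup (fun t => Real.sqrt (gradSq (u t))) (𝓝[<] Tstar.toReal) = 1) :
    Tstar = ⊤ :=
  global_existence_Aplus_general μ Q hQ hSQ hPchar u₀ h₀S h₀P Tstar hT u hu0 hmem hmass henergy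
    hcontP halt
end
end

section
/- Let μ ∈ {0,1} and let u₀ ∈ H¹(ℝ²) ∩ L²(|x|² dx) satisfy ‖∇u₀‖_{L²} < 1 and E_μ(u₀) < 0. Then the corresponding maximal solution of the focusing NLS i∂_t u + Δu = −f_μ(u), u(0) = u₀, blows up in finite time. -/
/-!
Glassey's virial argument. With `s = 4π|z|²` one has
`4π (Re (z̄ f_μ(z)) - 4 F_μ(z)) = (s - 2) eˢ + s + 2 ≥ 0`, hence `I_μ(φ) ≤ 2 E_μ(φ)`. If the solution were global, energy conservation and the virial identity
would make the variance `‖x u(t)‖²_{L²}` a nonnegative function on `[0, ∞)` whose second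
derivative stays below `16 E_μ(u₀) < 0`, which is impossible.
-/

open MeasureTheory Real Filter
open scoped Topology ENNReal

noncomputable section

namespace Real

lemma sub_two_mul_exp_add_self_add_two_nonneg {s : ℝ} (hs : 0 ≤ s) :
    0 ≤ (s - 2) * exp s + s + 2 := by
  set g : ℝ → ℝ := fun y => (y - 2) * exp y + y + 2
  have hg : ∀ x, HasDerivAt g ((x - 1) * exp x + 1) x := fun x =>
    ((((hasDerivAt_id x).sub_const 2).mul (hasDerivAt_exp x)).add (hasDerivAt_id x)).add_const 2
      |>.congr_deriv (by simp only [id]; ring)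
  -- `g' = (x - 1) eˣ + 1 ≥ 0` because `e⁻ˣ ≥ 1 - x`
  have hg' : ∀ x, 0 ≤ deriv g x := fun x => by
    have h : exp (-x) * exp x = 1 := by rw [← exp_add]; simp
    rw [(hg x).deriv]
    nlinarith [mul_le_mul_of_nonneg_right (add_one_le_exp (-x)) (exp_pos x).le]
  have := monotone_of_deriv_nonneg (fun x => (hg x).differentiableAt) hg' hs
  simpa [g] using this

lemma sq_le_two_mul_exp_sub_one {x : ℝ} (hx : 0 ≤ x) : x ^ 2 ≤ 2 * (exp x - 1) := by
  nlinarith [quadratic_le_exp_of_nonneg hx]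

lemma exp_sub_one_mul_exp_sub_one_le {x y : ℝ} (hx : 0 ≤ x) (hy : 0 ≤ y) :
    (exp x - 1) * (exp y - 1) ≤ exp (x + y) - 1 := by
  rw [exp_add]
  nlinarith [one_le_exp hx, one_le_exp hy]

end Real

lemma four_mul_Fmu_le_nlDensity (μ : ℝ) (z : ℂ) : 4 * Fmu μ z ≤ nlDensity μ z := by
  have hs := sub_two_mul_exp_add_self_add_two_nonneg (s := 4 * π * ‖z‖ ^ 2) (by positivity)
  rw [Fmu, nlDensity, ← mul_div_assoc, div_le_iff₀ (by positivity)]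
  nlinarith [pi_pos]

namespace ExpIntegrable

variable {v : E2 → ℂ}

lemma integrable_norm_sq (hve : ExpIntegrable v) (hv : Continuous v) :
    Integrable fun x => ‖v x‖ ^ 2 :=
  (hve 1 one_pos).mono' (by fun_prop) <| ae_of_all _ fun x => by
    rw [norm_of_nonneg (by positivity)]
    linarith [add_one_le_exp (1 * ‖v x‖ ^ 2)]

lemma integrable_norm_pow_four (hve : ExpIntegrable v) (hv : Continuous v) :
    Integrable fun x => ‖v x‖ ^ 4 :=
  ((hve 1 one_pos).const_mul 2).mono' (by fun_prop) <| ae_of_all _ fun x => by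
    rw [norm_of_nonneg (by positivity), one_mul, show ‖v x‖ ^ 4 = (‖v x‖ ^ 2) ^ 2 by ring]
    exact sq_le_two_mul_exp_sub_one (by positivity)

lemma integrable_exp_sub_one_mul_norm_sq (hve : ExpIntegrable v) (hv : Continuous v)
    {a : ℝ} (ha : 0 < a) :
    Integrable fun x => (exp (a * ‖v x‖ ^ 2) - 1) * ‖v x‖ ^ 2 :=
  (hve (a + 1) (by linarith)).mono' (by fun_prop) <| ae_of_all _ fun x => by
    have hr : 0 ≤ ‖v x‖ ^ 2 := by positivity
    have hexp : 0 ≤ exp (a * ‖v x‖ ^ 2) - 1 := by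
      linarith [one_le_exp (mul_nonneg ha.le hr)]
    rw [norm_of_nonneg (mul_nonneg hexp hr)]
    calc (exp (a * ‖v x‖ ^ 2) - 1) * ‖v x‖ ^ 2
        ≤ (exp (a * ‖v x‖ ^ 2) - 1) * (exp (1 * ‖v x‖ ^ 2) - 1) := by
          gcongr
          linarith [add_one_le_exp (1 * ‖v x‖ ^ 2)]
      _ ≤ exp ((a + 1) * ‖v x‖ ^ 2) - 1 := by
          rw [add_mul]
          exact exp_sub_one_mul_exp_sub_one_le (by positivity) (by positivity)

lemma integrable_Fmu (hve : ExpIntegrable v) (hv : Continuous v) (μ : ℝ) :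
    Integrable fun x => Fmu μ (v x) := by
  have hF : (fun x => Fmu μ (v x)) = fun x => (1 / (8 * π)) * (exp (4 * π * ‖v x‖ ^ 2) - 1)
      - (1 / 2) * ‖v x‖ ^ 2 - (π * μ) * ‖v x‖ ^ 4 := by
    funext x
    rw [Fmu]
    field_simp
    ring
  rw [hF]
  exact (((hve _ (by positivity)).const_mul _).sub ((hve.integrable_norm_sq hv).const_mul _)).sub
    ((hve.integrable_norm_pow_four hv).const_mul _)

lemma integrable_nlDensity (hve : ExpIntegrable v) (hv : Continuous v) (μ : ℝ) :
    Integrable fun x => nlDensity μ (v x) := by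
  have hN : (fun x => nlDensity μ (v x)) = fun x =>
      (exp (4 * π * ‖v x‖ ^ 2) - 1) * ‖v x‖ ^ 2 - (4 * π * μ) * ‖v x‖ ^ 4 := by
    funext x
    rw [nlDensity]
    ring
  rw [hN]
  exact (hve.integrable_exp_sub_one_mul_norm_sq hv (by positivity)).sub
    ((hve.integrable_norm_pow_four hv).const_mul _)

end ExpIntegrable

lemma Imu_le_two_mul_Emu (μ : ℝ) {v : E2 → ℂ} (hv : Continuous v) (hve : ExpIntegrable v) :
    Imu μ v ≤ 2 * Emu μ v := by
  have hF := hve.integrable_Fmu hv μ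
  have hN := hve.integrable_nlDensity hv μ
  have hmono : ∫ x, 2 * Fmu μ (v x) ≤ ∫ x, (nlDensity μ (v x) - 2 * Fmu μ (v x)) :=
    integral_mono (hF.const_mul 2) (hN.sub (hF.const_mul 2)) fun x => by
      linarith [four_mul_Fmu_le_nlDensity μ (v x)]
  rw [integral_const_mul] at hmono
  rw [Imu, Emu]
  linarith

lemma sub_le_mul_of_hasDerivAt_le {f f' : ℝ → ℝ} {C : ℝ}
    (hf : ∀ t, 0 ≤ t → HasDerivAt f (f' t) t) (hle : ∀ t, 0 ≤ t → f' t ≤ C)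
    {t : ℝ} (ht : 0 ≤ t) : f t - f 0 ≤ C * t := by
  have key := (convex_Ici (0 : ℝ)).image_sub_le_mul_sub_of_deriv_le
    (fun s hs => (hf s hs).continuousAt.continuousWithinAt)
    (fun s hs => (hf s (interior_subset hs)).differentiableAt.differentiableWithinAt)
    (fun s hs => (hf s (interior_subset hs)).deriv ▸ hle s (interior_subset hs))
    0 Set.self_mem_Ici t ht ht
  simpa using key

lemma le_quadratic_of_hasDerivAt_of_hasDerivAt_le {f f' f'' : ℝ → ℝ} {c : ℝ}
    (hf : ∀ t, 0 ≤ t → HasDerivAt f (f' t) t) (hf' : ∀ t, 0 ≤ t → HasDerivAt f' (f'' t) t)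
    (hle : ∀ t, 0 ≤ t → f'' t ≤ c) {t : ℝ} (ht : 0 ≤ t) :
    f t ≤ f 0 + f' 0 * t + c / 2 * t ^ 2 := by
  have hf'_le : ∀ s, 0 ≤ s → f' s ≤ f' 0 + c * s := fun s hs => by
    linarith [sub_le_mul_of_hasDerivAt_le hf' hle hs]
  have hg : ∀ s, 0 ≤ s → HasDerivAt (fun r => f r - f' 0 * r - c / 2 * r ^ 2)
      (f' s - f' 0 - c * s) s := fun s hs =>
    (((hf s hs).sub ((hasDerivAt_id s).const_mul (f' 0))).sub
      ((hasDerivAt_pow 2 s).const_mul (c / 2))).congr_deriv (by push_cast; ring)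
  have := sub_le_mul_of_hasDerivAt_le hg (C := 0) (fun s hs => by linarith [hf'_le s hs]) ht
  simp only [mul_zero, zero_mul, sub_zero, zero_pow two_ne_zero] at this
  linarith

lemma exists_quadratic_neg {a b c : ℝ} (hc : c < 0) :
    ∃ t, 0 ≤ t ∧ a + b * t + c * t ^ 2 < 0 := by
  have hlin : Tendsto (fun t : ℝ => b + c * t) atTop atBot :=
    tendsto_atBot_add_const_left _ b (tendsto_id.const_mul_atTop_of_neg hc)
  have hquad : Tendsto (fun t : ℝ => a + t * (b + c * t)) atTop atBot :=
    tendsto_atBot_add_const_left _ a (tendsto_id.atTop_mul_atBot₀ hlin)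
  obtain ⟨t, ht, hneg⟩ := ((eventually_ge_atTop 0).and (hquad.eventually_lt_atBot 0)).exists
  exact ⟨t, ht, by linarith [show a + t * (b + c * t) = a + b * t + c * t ^ 2 by ring]⟩

lemma exists_neg_of_hasDerivAt_of_hasDerivAt_le_neg {f f' f'' : ℝ → ℝ} {c : ℝ} (hc : c < 0)
    (hf : ∀ t, 0 ≤ t → HasDerivAt f (f' t) t) (hf' : ∀ t, 0 ≤ t → HasDerivAt f' (f'' t) t)
    (hle : ∀ t, 0 ≤ t → f'' t ≤ c) : ∃ t, 0 ≤ t ∧ f t < 0 := by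
  obtain ⟨t, ht, hneg⟩ := exists_quadratic_neg (a := f 0) (b := f' 0) (by linarith : c / 2 < 0)
  exact ⟨t, ht, (le_quadratic_of_hasDerivAt_of_hasDerivAt_le hf hf' hle ht).trans_lt hneg⟩

theorem blowup_negative_energy_general (μ : ℝ)
    (u₀ : E2 → ℂ) (h₀E : Emu μ u₀ < 0)
    -- the maximal solution on `[0, T*)`
    (Tstar : ℝ≥0∞) (u : ℝ → E2 → ℂ)
    (hmem : ∀ t : ℝ, 0 ≤ t → ENNReal.ofReal t < Tstar → MemH1 (u t) ∧ ExpIntegrable (u t))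
    (henergy : ∀ t : ℝ, 0 ≤ t → ENNReal.ofReal t < Tstar → Emu μ (u t) = Emu μ u₀)
    -- persistence of finite variance and the virial identity
    (V' : ℝ → ℝ)
    (hV₁ : ∀ t : ℝ, 0 ≤ t → ENNReal.ofReal t < Tstar →
      HasDerivAt (fun s => ∫ x : E2, ‖x‖ ^ 2 * ‖u s x‖ ^ 2) (V' t) t)
    (hV₂ : ∀ t : ℝ, 0 ≤ t → ENNReal.ofReal t < Tstar →
      HasDerivAt V' (8 * Imu μ (u t)) t) :
    Tstar < ⊤ := by
  by_contra hglobal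
  have hlt : ∀ t : ℝ, ENNReal.ofReal t < Tstar := fun t =>
    ENNReal.ofReal_lt_top.trans_le (not_lt.mp hglobal)
  have hvirial : ∀ t : ℝ, 0 ≤ t → 8 * Imu μ (u t) ≤ 16 * Emu μ u₀ := fun t ht => by
    obtain ⟨⟨-, hdiff, -⟩, hexp⟩ := hmem t ht (hlt t)
    linarith [Imu_le_two_mul_Emu μ hdiff.continuous hexp, henergy t ht (hlt t)]
  obtain ⟨t, -, hneg⟩ := exists_neg_of_hasDerivAt_of_hasDerivAt_le_neg (by linarith)
    (fun t ht => hV₁ t ht (hlt t)) (fun t ht => hV₂ t ht (hlt t)) hvirial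
  exact hneg.not_ge (integral_nonneg fun x => by positivity)

/-- finite time blow-up for negative energy data of finite variance.
If `u₀ ∈ H¹(ℝ²) ∩ L²(|x|²dx)` with `‖∇u₀‖_{L²} < 1` and `E_μ(u₀) < 0`, then the maximal
solution of `i∂ₜu + Δu = -f_μ(u)`, `u(0) = u₀` (which stays in `Σ` and satisfies the
virial identity `(d²/dt²)‖xu(t)‖²_{L²} = 8 I_μ(u(t))`) blows up in finite time. -/
theorem blowup_negative_energy (μ : ℝ) (hμ : μ = 0 ∨ μ = 1)
    (u₀ : E2 → ℂ) (h₀mem : MemH1 u₀) (h₀exp : ExpIntegrable u₀)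
    (h₀var : Integrable (fun x : E2 => ‖x‖ ^ 2 * ‖u₀ x‖ ^ 2))
    (h₀grad : Real.sqrt (gradSq u₀) < 1) (h₀E : Emu μ u₀ < 0)
    -- the maximal solution on `[0, T*)`
    (Tstar : ℝ≥0∞) (hT : 0 < Tstar) (u : ℝ → E2 → ℂ) (hu0 : u 0 = u₀)
    (hmem : ∀ t : ℝ, 0 ≤ t → ENNReal.ofReal t < Tstar → MemH1 (u t) ∧ ExpIntegrable (u t))
    (hsol : ∀ t : ℝ, 0 ≤ t → ENNReal.ofReal t < Tstar → ∀ x : E2,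
      Complex.I * deriv (fun s => u s x) t + lap (u t) x = -(fmu μ (u t x)))
    (hmass : ∀ t : ℝ, 0 ≤ t → ENNReal.ofReal t < Tstar → l2Sq (u t) = l2Sq u₀)
    (henergy : ∀ t : ℝ, 0 ≤ t → ENNReal.ofReal t < Tstar → Emu μ (u t) = Emu μ u₀)
    -- persistence of finite variance and the virial identity
    (hvar : ∀ t : ℝ, 0 ≤ t → ENNReal.ofReal t < Tstar →
      Integrable (fun x : E2 => ‖x‖ ^ 2 * ‖u t x‖ ^ 2))
    (V' : ℝ → ℝ)
    (hV₁ : ∀ t : ℝ, 0 ≤ t → ENNReal.ofReal t < Tstar →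
      HasDerivAt (fun s => ∫ x : E2, ‖x‖ ^ 2 * ‖u s x‖ ^ 2) (V' t) t)
    (hV₂ : ∀ t : ℝ, 0 ≤ t → ENNReal.ofReal t < Tstar →
      HasDerivAt V' (8 * Imu μ (u t)) t)
    -- the blow-up alternative
    (halt : Tstar ≠ ⊤ →
      Filter.limsup (fun t => Real.sqrt (gradSq (u t))) (𝓝[<] Tstar.toReal) = 1) :
    Tstar < ⊤ :=
  blowup_negative_energy_general μ u₀ h₀E Tstar u hmem henergy V' hV₁ hV₂
end
end

section
/- Let μ ∈ {0,1}, φ ∈ H¹(ℝ²)∖{0}, and set φ_λ(x) := λ φ(λx) for λ > 0. Then: (i) ∂_λ S_μ(φ_λ) = I_μ(φ_λ)/λ; (ii) I_μ(φ_λ) = λ² Φ_μ(λ), where Φ_μ(λ) := ‖∇φ‖²_{L²} − ∫ 4π|φ|⁴ k_μ(4πλ²|φ|²) dx with k_μ(s) := s^{−1}e^s − s^{−2}e^s + s^{−2} − μ/2, and λ ↦ Φ_μ(λ) is strictly decreasing on (0,∞) with lim_{λ→0} Φ_μ(λ) = ‖∇φ‖²_{L²} − 2π(1−μ)‖φ‖⁴_{L⁴}.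 In particular, if Φ_μ(λ_μ) = 0 for some λ_μ > 0, then λ_μ is unique and λ ↦ S_μ(φ_λ) attains a strict maximum at λ_μ. -/
open MeasureTheory Real Filter
open scoped Topology ENNReal

noncomputable section

/-- The scaling `φ_λ(x) = λ φ(λx)`. -/
def scl (l : ℝ) (φ : E2 → ℂ) : E2 → ℂ := fun x => (l : ℂ) * φ (l • x)

/-- The function `k_μ(s) = s⁻¹ e^s - s⁻² e^s + s⁻² - μ/2`. -/
def kmu (μ s : ℝ) : ℝ := s⁻¹ * Real.exp s - (s ^ 2)⁻¹ * Real.exp s + (s ^ 2)⁻¹ - μ / 2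

/-- `Φ_μ(λ) = ‖∇φ‖² - ∫ 4π|φ|⁴ k_μ(4πλ²|φ|²)`. -/
def Phi (μ : ℝ) (φ : E2 → ℂ) (l : ℝ) : ℝ :=
  gradSq φ - ∫ x : E2, 4 * π * ‖φ x‖ ^ 4 * kmu μ (4 * π * l ^ 2 * ‖φ x‖ ^ 2)


/-! Along the scaling `φ_λ = λ φ(λ ·)` the gradient term scales like `λ²`, the `L²` term is
invariant and the potential term becomes `λ⁻² ∫ F_μ(λ φ)`. Since
`∂_λ F_μ(λ z) = Re(z̄ f_μ(λ z)) / λ` and `Re(z̄ f_μ(z)) - 2 F_μ(z) = 4π|z|⁴ k_μ(4π|z|²)`, both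
`∂_λ S_μ(φ_λ)` and `I_μ(φ_λ) / λ` equal `λ Φ_μ(λ)`. The function `k_μ` is strictly increasing
on `(0, ∞)`, with `k_μ'(s) = (e^s (s² - 2s + 2) - 2) / s³ > 0`, and tends to `(1 - μ) / 2` at
`0⁺`; this gives the monotonicity and the limit of `Φ_μ`. All integrands are dominated by
`|φ|⁴ (e^{a|φ|²} + |μ|)`, which is integrable because `φ` is exponentially integrable. Finally,
a derivative `λ Φ_μ(λ)` whose second factor decreases strictly through zero at `λ_μ` forces a
strict maximum there.
-/

lemma pos_of_hasDerivAt_pos {f f' : ℝ → ℝ} (hf : ∀ x, HasDerivAt f (f' x) x)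
    (hf' : ∀ x, 0 < x → 0 < f' x) (h0 : f 0 = 0) {s : ℝ} (hs : 0 < s) : 0 < f s := by
  have hmono : StrictMonoOn f (Set.Ici 0) :=
    strictMonoOn_of_deriv_pos (convex_Ici 0) (fun x _ => (hf x).continuousAt.continuousWithinAt)
      fun x hx => by
        rw [interior_Ici] at hx
        rw [(hf x).deriv]
        exact hf' x hx
  simpa [h0] using hmono (Set.mem_Ici.2 le_rfl) hs.le hs

lemma exp_mul_sub_one_add_one_pos {s : ℝ} (hs : 0 < s) : 0 < exp s * (s - 1) + 1 := by
  have h := add_one_lt_exp (neg_ne_zero.2 hs.ne')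
  have : exp s * exp (-s) = 1 := by rw [← exp_add, add_neg_cancel, exp_zero]
  nlinarith [exp_pos s]

lemma two_lt_exp_mul_quadratic {s : ℝ} (hs : 0 < s) : 2 < exp s * (s ^ 2 - 2 * s + 2) := by
  have hderiv (x : ℝ) :
      HasDerivAt (fun s => exp s * (s ^ 2 - 2 * s + 2) - 2) (exp x * x ^ 2) x := by
    refine (((hasDerivAt_exp x).mul (((hasDerivAt_pow 2 x).sub
      ((hasDerivAt_id x).const_mul 2)).add_const 2)).sub_const 2).congr_deriv ?_
    simp only [id, Pi.sub_apply]
    ring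
  have := pos_of_hasDerivAt_pos hderiv (fun x hx => by positivity) (by simp) hs
  linarith

lemma kmu_eq_div (μ : ℝ) {s : ℝ} (hs : s ≠ 0) :
    kmu μ s = (exp s * (s - 1) + 1) / s ^ 2 - μ / 2 := by
  unfold kmu
  field_simp

lemma hasDerivAt_kmu (μ : ℝ) {s : ℝ} (hs : s ≠ 0) :
    HasDerivAt (kmu μ) ((exp s * (s ^ 2 - 2 * s + 2) - 2) / s ^ 3) s := by
  have hsq : HasDerivAt (fun s : ℝ => (s ^ 2)⁻¹) (-(2 * s) / (s ^ 2) ^ 2) s :=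
    ((hasDerivAt_pow 2 s).inv (pow_ne_zero 2 hs)).congr_deriv (by simp)
  have h : HasDerivAt (fun s => s⁻¹ * exp s - (s ^ 2)⁻¹ * exp s + (s ^ 2)⁻¹ - μ / 2) _ s :=
    ((((hasDerivAt_inv hs).mul (hasDerivAt_exp s)).sub (hsq.mul (hasDerivAt_exp s))).add
      hsq).sub_const (μ / 2)
  refine h.congr_deriv ?_
  field_simp
  ring

lemma kmu_strictMonoOn (μ : ℝ) : StrictMonoOn (kmu μ) (Set.Ioi 0) :=
  strictMonoOn_of_deriv_pos (convex_Ioi 0)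
    (fun _ hs => (hasDerivAt_kmu μ (ne_of_gt hs)).continuousAt.continuousWithinAt)
    fun s hs => by
      rw [interior_Ioi] at hs
      rw [(hasDerivAt_kmu μ (ne_of_gt hs)).deriv]
      exact div_pos (sub_pos.2 (two_lt_exp_mul_quadratic hs)) (pow_pos hs 3)

lemma abs_kmu_le (μ : ℝ) {s : ℝ} (hs : 0 ≤ s) : |kmu μ s| ≤ exp s + |μ| := by
  rcases hs.eq_or_lt with rfl | hs
  · norm_num [kmu, abs_div]
    linarith [abs_nonneg μ]
  -- `0 < kmu μ s + μ / 2 ≤ exp s`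
  have hlow := div_pos (exp_mul_sub_one_add_one_pos hs) (pow_pos hs 2)
  have hup : (exp s * (s - 1) + 1) / s ^ 2 ≤ exp s := by
    rw [div_le_iff₀ (pow_pos hs 2)]
    nlinarith [two_lt_exp_mul_quadratic hs, exp_pos s, sq_nonneg s]
  rw [kmu_eq_div μ hs.ne', abs_le]
  constructor <;> cases abs_cases μ <;> linarith

lemma tendsto_kmu_nhdsGT_zero (μ : ℝ) :
    Tendsto (kmu μ) (𝓝[>] 0) (𝓝 (1 / 2 - μ / 2)) := by
  have hnum : Tendsto (fun s => exp s * (s - 1) + 1) (𝓝[>] 0) (𝓝 0) := by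
    have : Continuous (fun s => exp s * (s - 1) + 1) := by fun_prop
    simpa using (this.tendsto 0).mono_left nhdsWithin_le_nhds
  have hden : Tendsto (fun s : ℝ => s ^ 2) (𝓝[>] 0) (𝓝 0) := by
    simpa using ((continuous_pow 2).tendsto (0 : ℝ)).mono_left nhdsWithin_le_nhds
  have hratio : Tendsto (fun s => exp s * s / (2 * s)) (𝓝[>] 0) (𝓝 (1 / 2)) := by
    have : Tendsto (fun s => exp s / 2) (𝓝[>] 0) (𝓝 (1 / 2)) := by
      simpa using ((continuous_exp.div_const 2).tendsto 0).mono_left nhdsWithin_le_nhds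
    refine this.congr' ?_
    filter_upwards [self_mem_nhdsWithin] with s (hs : 0 < s)
    field_simp
  have hquot := HasDerivAt.lhopital_zero_nhdsGT
    (Eventually.of_forall fun x => by
      refine (((hasDerivAt_exp x).mul ((hasDerivAt_id x).sub_const 1)).add_const 1).congr_deriv ?_
      simp only [id]
      ring)
    (Eventually.of_forall fun x => by simpa using hasDerivAt_pow 2 x)
    (eventually_nhdsWithin_of_forall fun x (hx : 0 < x) => by positivity) hnum hden hratio
  refine (hquot.sub_const (μ / 2)).congr' ?_
  filter_upwards [self_mem_nhdsWithin] with s (hs : 0 < s)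
  exact (kmu_eq_div μ hs.ne').symm

def phiDensity (μ l : ℝ) (z : ℂ) : ℝ := 4 * π * ‖z‖ ^ 4 * kmu μ (4 * π * l ^ 2 * ‖z‖ ^ 2)

lemma Phi_eq_gradSq_sub_integral_phiDensity (μ : ℝ) (φ : E2 → ℂ) (l : ℝ) :
    Phi μ φ l = gradSq φ - ∫ x, phiDensity μ l (φ x) := rfl

lemma norm_ofReal_mul_sq (t : ℝ) (z : ℂ) : ‖(t : ℂ) * z‖ ^ 2 = t ^ 2 * ‖z‖ ^ 2 := by
  rw [norm_mul, Complex.norm_real, Real.norm_eq_abs, mul_pow, sq_abs]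

lemma norm_ofReal_mul_pow_four (t : ℝ) (z : ℂ) : ‖(t : ℂ) * z‖ ^ 4 = t ^ 4 * ‖z‖ ^ 4 := by
  rw [norm_mul, Complex.norm_real, Real.norm_eq_abs, mul_pow, Even.pow_abs ⟨2, rfl⟩]

lemma nlDensity_sub_two_mul_Fmu (μ : ℝ) (z : ℂ) :
    nlDensity μ z - 2 * Fmu μ z = 4 * π * ‖z‖ ^ 4 * kmu μ (4 * π * ‖z‖ ^ 2) := by
  rcases eq_or_ne z 0 with rfl | hz
  · simp [nlDensity, Fmu]
  have hr : ‖z‖ ≠ 0 := norm_ne_zero_iff.2 hz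
  unfold nlDensity Fmu kmu
  field_simp
  ring

lemma nlDensity_sub_two_mul_Fmu_ofReal_mul (μ t : ℝ) (z : ℂ) :
    nlDensity μ (t * z) - 2 * Fmu μ (t * z) = t ^ 4 * phiDensity μ t z := by
  rw [nlDensity_sub_two_mul_Fmu, phiDensity, norm_ofReal_mul_pow_four, norm_ofReal_mul_sq]
  ring_nf

lemma hasDerivAt_Fmu_ofReal_mul (μ : ℝ) (z : ℂ) (t : ℝ) :
    HasDerivAt (fun t : ℝ => Fmu μ (t * z)) (nlDensity μ (t * z) / t) t := by
  have hF : (fun t : ℝ => Fmu μ (t * z)) = fun t =>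
      (exp (4 * π * ‖z‖ ^ 2 * t ^ 2) - 1 - 4 * π * ‖z‖ ^ 2 * t ^ 2
        - 8 * π ^ 2 * μ * ‖z‖ ^ 4 * t ^ 4) / (8 * π) := by
    funext t
    rw [Fmu, norm_ofReal_mul_pow_four, norm_ofReal_mul_sq]
    ring_nf
  have h2 := hasDerivAt_pow 2 t
  have h := ((((h2.const_mul (4 * π * ‖z‖ ^ 2)).exp.sub_const 1).sub
    (h2.const_mul (4 * π * ‖z‖ ^ 2))).sub ((hasDerivAt_pow 4 t).const_mul
      (8 * π ^ 2 * μ * ‖z‖ ^ 4))).div_const (8 * π)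
  rw [hF]
  refine h.congr_deriv ?_
  rw [nlDensity, norm_ofReal_mul_sq]
  field_simp
  ring

lemma hasDerivAt_Fmu_ofReal_mul_div_sq (μ : ℝ) (z : ℂ) {t : ℝ} (ht : t ≠ 0) :
    HasDerivAt (fun t : ℝ => Fmu μ (t * z) / t ^ 2) (t * phiDensity μ t z) t := by
  refine ((hasDerivAt_Fmu_ofReal_mul μ z t).div (hasDerivAt_pow 2 t)
    (pow_ne_zero 2 ht)).congr_deriv ?_
  have hvirial := nlDensity_sub_two_mul_Fmu_ofReal_mul μ t z
  simp only [Nat.cast_ofNat, Nat.add_one_sub_one, pow_one]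
  field_simp
  linear_combination hvirial

lemma abs_phiDensity_le (μ : ℝ) (z : ℂ) {l L : ℝ} (hlL : |l| ≤ L) :
    |phiDensity μ l z| ≤ 4 * π * ‖z‖ ^ 4 * (exp (4 * π * L ^ 2 * ‖z‖ ^ 2) + |μ|) := by
  have hsq : l ^ 2 ≤ L ^ 2 := sq_le_sq' (neg_le_of_abs_le hlL) (le_of_abs_le hlL)
  rw [phiDensity, abs_mul, abs_of_nonneg (by positivity)]
  gcongr
  calc |kmu μ (4 * π * l ^ 2 * ‖z‖ ^ 2)| ≤ exp (4 * π * l ^ 2 * ‖z‖ ^ 2) + |μ| :=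
        abs_kmu_le μ (by positivity)
    _ ≤ exp (4 * π * L ^ 2 * ‖z‖ ^ 2) + |μ| := by gcongr

lemma phiDensity_strictMonoOn (μ : ℝ) {z : ℂ} (hz : z ≠ 0) :
    StrictMonoOn (fun l => phiDensity μ l z) (Set.Ioi 0) := by
  intro l₁ (h₁ : 0 < l₁) l₂ (h₂ : 0 < l₂) hl
  have hr : 0 < ‖z‖ := norm_pos_iff.2 hz
  have hs : 4 * π * l₁ ^ 2 * ‖z‖ ^ 2 < 4 * π * l₂ ^ 2 * ‖z‖ ^ 2 := by gcongr
  have hk := kmu_strictMonoOn μ (show 0 < 4 * π * l₁ ^ 2 * ‖z‖ ^ 2 by positivity)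
    (show 0 < 4 * π * l₂ ^ 2 * ‖z‖ ^ 2 by positivity) hs
  simp only [phiDensity]
  gcongr

lemma tendsto_phiDensity_nhdsGT_zero (μ : ℝ) (z : ℂ) :
    Tendsto (fun l => phiDensity μ l z) (𝓝[>] 0) (𝓝 (2 * π * (1 - μ) * ‖z‖ ^ 4)) := by
  rcases eq_or_ne z 0 with rfl | hz
  · simp [phiDensity]
  have hr : 0 < ‖z‖ := norm_pos_iff.2 hz
  have hs : Tendsto (fun l : ℝ => 4 * π * l ^ 2 * ‖z‖ ^ 2) (𝓝[>] 0) (𝓝[>] 0) := by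
    refine tendsto_nhdsWithin_of_tendsto_nhds_of_eventually_within _ ?_ ?_
    · have : Continuous (fun l : ℝ => 4 * π * l ^ 2 * ‖z‖ ^ 2) := by fun_prop
      simpa using (this.tendsto 0).mono_left nhdsWithin_le_nhds
    · filter_upwards [self_mem_nhdsWithin] with l (hl : 0 < l)
      exact Set.mem_Ioi.2 (by positivity)
  have h := ((tendsto_kmu_nhdsGT_zero μ).comp hs).const_mul (4 * π * ‖z‖ ^ 4)
  rw [show 2 * π * (1 - μ) * ‖z‖ ^ 4 = 4 * π * ‖z‖ ^ 4 * (1 / 2 - μ / 2) by ring]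
  exact h

lemma sq_mul_exp_le {a s : ℝ} (ha : 0 ≤ a) (hs : 0 ≤ s) :
    s ^ 2 * exp (a * s) ≤ 4 * (exp ((a + 1) * s) - 1) := by
  -- `exp s = exp (s / 2) ^ 2 ≥ (1 + s / 2) ^ 2`
  have hsq : s ^ 2 ≤ 4 * (exp s - 1) := by
    have h : exp s = exp (s / 2) * exp (s / 2) := by rw [← exp_add, add_halves]
    nlinarith [add_one_le_exp (s / 2)]
  have hsplit : exp ((a + 1) * s) = exp (a * s) * exp s := by rw [← exp_add]; ring_nf
  nlinarith [one_le_exp (mul_nonneg ha hs), exp_pos (a * s)]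

section Integrability

variable {φ : E2 → ℂ}

lemma integrable_norm_pow_four_mul_exp (hφ : AEStronglyMeasurable φ volume)
    (hexp : ExpIntegrable φ) {a : ℝ} (ha : 0 ≤ a) :
    Integrable (fun x => ‖φ x‖ ^ 4 * exp (a * ‖φ x‖ ^ 2)) := by
  refine ((hexp (a + 1) (by linarith)).const_mul 4).mono'
    (by fun_prop) (ae_of_all _ fun x => ?_)
  rw [Real.norm_eq_abs, abs_of_nonneg (by positivity), show ‖φ x‖ ^ 4 = (‖φ x‖ ^ 2) ^ 2 by ring]
  exact sq_mul_exp_le ha (by positivity)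

lemma integrable_norm_pow_four (hφ : AEStronglyMeasurable φ volume) (hexp : ExpIntegrable φ) :
    Integrable (fun x => ‖φ x‖ ^ 4) := by
  simpa using integrable_norm_pow_four_mul_exp hφ hexp le_rfl

lemma integrable_phiDensity_bound (hφ : AEStronglyMeasurable φ volume) (hexp : ExpIntegrable φ)
    (μ L : ℝ) :
    Integrable (fun x => 4 * π * ‖φ x‖ ^ 4 * (exp (4 * π * L ^ 2 * ‖φ x‖ ^ 2) + |μ|)) := by
  have h := ((integrable_norm_pow_four_mul_exp hφ hexp (a := 4 * π * L ^ 2) (by positivity)).add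
    ((integrable_norm_pow_four hφ hexp).mul_const |μ|)).const_mul (4 * π)
  refine h.congr (ae_of_all _ fun x => ?_)
  simp only [Pi.add_apply]
  ring_nf

lemma integrable_phiDensity (hφ : AEStronglyMeasurable φ volume) (hexp : ExpIntegrable φ)
    (μ l : ℝ) : Integrable (fun x => phiDensity μ l (φ x)) := by
  have hmeas : Measurable (phiDensity μ l) := by unfold phiDensity kmu; fun_prop
  exact (integrable_phiDensity_bound hφ hexp μ |l|).mono'
    (hmeas.comp_aemeasurable hφ.aemeasurable).aestronglyMeasurable
    (ae_of_all _ fun x => (abs_phiDensity_le μ (φ x) le_rfl).trans_eq (by rw [sq_abs]))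

lemma integrable_Fmu_ofReal_mul (hφ : MemLp φ 2 volume) (hexp : ExpIntegrable φ) (μ : ℝ)
    {c : ℝ} (hc : c ≠ 0) : Integrable (fun x => Fmu μ (c * φ x)) := by
  have hsq : Integrable (fun x => ‖φ x‖ ^ 2) :=
    (memLp_two_iff_integrable_sq_norm hφ.aestronglyMeasurable).1 hφ
  have h := (((hexp (4 * π * c ^ 2) (by positivity)).sub (hsq.const_mul (4 * π * c ^ 2))).sub
    ((integrable_norm_pow_four hφ.aestronglyMeasurable hexp).const_mul
      (8 * π ^ 2 * μ * c ^ 4))).div_const (8 * π)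
  refine h.congr (ae_of_all _ fun x => ?_)
  simp only [Pi.sub_apply, Fmu]
  rw [norm_ofReal_mul_pow_four, norm_ofReal_mul_sq]
  ring_nf

end Integrability

lemma integral_comp_smul_E2 (f : E2 → ℝ) (l : ℝ) :
    ∫ x, f (l • x) = (l ^ 2)⁻¹ * ∫ x, f x := by
  rw [Measure.integral_comp_smul, finrank_euclideanSpace_fin, smul_eq_mul,
    abs_of_nonneg (by positivity)]

section Scaling

variable {φ : E2 → ℂ}

lemma integral_comp_scl (G : ℂ → ℝ) (l : ℝ) :
    ∫ x, G (scl l φ x) = (l ^ 2)⁻¹ * ∫ x, G (l * φ x) :=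
  integral_comp_smul_E2 (fun y => G (l * φ y)) l

lemma fderiv_scl (hφ : Differentiable ℝ φ) (l : ℝ) (x : E2) :
    fderiv ℝ (scl l φ) x = (l ^ 2) • fderiv ℝ φ (l • x) := by
  have h := (((hφ (l • x)).hasFDerivAt).comp x ((hasFDerivAt_id x).const_smul l)).const_mul
    (l : ℂ)
  refine h.fderiv.trans ?_
  ext v
  simp [sq, mul_assoc]

lemma gradSq_scl (hφ : Differentiable ℝ φ) (l : ℝ) : gradSq (scl l φ) = l ^ 2 * gradSq φ := by
  simp only [gradSq, fderiv_scl hφ, norm_smul, Real.norm_eq_abs, abs_pow, sq_abs, mul_pow]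
  rw [integral_const_mul, integral_comp_smul_E2 (fun y => ‖fderiv ℝ φ y‖ ^ 2)]
  rcases eq_or_ne l 0 with rfl | hl
  · simp
  · field_simp

lemma l2Sq_scl {l : ℝ} (hl : l ≠ 0) : l2Sq (scl l φ) = l2Sq φ := by
  simp only [l2Sq, scl, norm_ofReal_mul_sq]
  rw [integral_const_mul, integral_comp_smul_E2 (fun y => ‖φ y‖ ^ 2)]
  field_simp

lemma Imu_scl (μ : ℝ) (hφ : Differentiable ℝ φ) (l : ℝ) :
    Imu μ (scl l φ) = l ^ 2 * Phi μ φ l := by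
  rw [Imu, gradSq_scl hφ, integral_comp_scl (fun z => nlDensity μ z - 2 * Fmu μ z)]
  simp only [nlDensity_sub_two_mul_Fmu_ofReal_mul]
  rw [integral_const_mul, Phi_eq_gradSq_sub_integral_phiDensity]
  rcases eq_or_ne l 0 with rfl | hl
  · simp
  · field_simp

lemma Smu_scl (μ : ℝ) (hφ : Differentiable ℝ φ) {l : ℝ} (hl : l ≠ 0) :
    Smu μ (scl l φ) = l ^ 2 / 2 * gradSq φ + l2Sq φ / 2 - ∫ x, Fmu μ (l * φ x) / l ^ 2 := by
  rw [Smu, Emu, gradSq_scl hφ, l2Sq_scl hl, integral_comp_scl, integral_div]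
  ring

end Scaling

section Fibering

variable {φ : E2 → ℂ}

lemma hasDerivAt_integral_Fmu_ofReal_mul_div_sq (hφ : MemLp φ 2 volume) (hexp : ExpIntegrable φ)
    (μ : ℝ) {l₀ : ℝ} (hl₀ : 0 < l₀) :
    HasDerivAt (fun l : ℝ => ∫ x, Fmu μ (l * φ x) / l ^ 2)
      (l₀ * ∫ x, phiDensity μ l₀ (φ x)) l₀ := by
  have hmeas := hφ.aestronglyMeasurable
  have hderiv := hasDerivAt_integral_of_dominated_loc_of_deriv_le
    (F := fun (l : ℝ) x => Fmu μ (l * φ x) / l ^ 2)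
    (F' := fun l x => l * phiDensity μ l (φ x))
    (bound := fun x =>
      2 * l₀ * (4 * π * ‖φ x‖ ^ 4 * (exp (4 * π * (2 * l₀) ^ 2 * ‖φ x‖ ^ 2) + |μ|)))
    (Ioo_mem_nhds hl₀ (by linarith : l₀ < 2 * l₀))
    (Eventually.of_forall fun l => Continuous.comp_aestronglyMeasurable
      (g := fun z : ℂ => Fmu μ (l * z) / l ^ 2) (by unfold Fmu; fun_prop) hmeas)
    ((integrable_Fmu_ofReal_mul hφ hexp μ hl₀.ne').div_const _)
    ((integrable_phiDensity hmeas hexp μ l₀).const_mul l₀).aestronglyMeasurable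
    (ae_of_all _ fun x l hl => ?_)
    ((integrable_phiDensity_bound hmeas hexp μ (2 * l₀)).const_mul (2 * l₀))
    (ae_of_all _ fun x l hl => hasDerivAt_Fmu_ofReal_mul_div_sq μ (φ x) hl.1.ne')
  · rw [← integral_const_mul]
    exact hderiv.2
  · rw [Real.norm_eq_abs, abs_mul, abs_of_pos hl.1]
    exact mul_le_mul hl.2.le (abs_phiDensity_le μ (φ x) ((abs_of_pos hl.1).trans_lt hl.2).le)
      (abs_nonneg _) (by positivity)

lemma hasDerivAt_Smu_scl (μ : ℝ) (hφ : MemLp φ 2 volume) (hdiff : Differentiable ℝ φ)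
    (hexp : ExpIntegrable φ) {l : ℝ} (hl : 0 < l) :
    HasDerivAt (fun l => Smu μ (scl l φ)) (l * Phi μ φ l) l := by
  have hquad : HasDerivAt (fun l : ℝ => l ^ 2 / 2 * gradSq φ + l2Sq φ / 2) (l * gradSq φ) l :=
    ((((hasDerivAt_pow 2 l).div_const 2).mul_const _).add_const _).congr_deriv (by ring)
  have h := hquad.sub (hasDerivAt_integral_Fmu_ofReal_mul_div_sq hφ hexp μ hl)
  rw [Phi_eq_gradSq_sub_integral_phiDensity, mul_sub]
  refine h.congr_of_eventuallyEq ?_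
  filter_upwards [Ioi_mem_nhds hl] with t (ht : 0 < t)
  exact Smu_scl μ hdiff ht.ne'

lemma Phi_strictAntiOn (μ : ℝ) (hφ : AEStronglyMeasurable φ volume) (hexp : ExpIntegrable φ)
    (hφne : ¬ φ =ᵐ[volume] 0) : StrictAntiOn (Phi μ φ) (Set.Ioi 0) := by
  intro l₁ h₁ l₂ h₂ hl
  have hint (l : ℝ) := integrable_phiDensity hφ hexp μ l
  have hle : ∀ x, phiDensity μ l₁ (φ x) ≤ phiDensity μ l₂ (φ x) := fun x => by
    rcases eq_or_ne (φ x) 0 with hx | hx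
    · simp [phiDensity, hx]
    · exact (phiDensity_strictMonoOn μ hx h₁ h₂ hl).le
  have hne : (∫ x, phiDensity μ l₁ (φ x)) ≠ ∫ x, phiDensity μ l₂ (φ x) := fun h => hφne <|
    ((integral_eq_iff_of_ae_le (hint l₁) (hint l₂) (ae_of_all _ hle)).1 h).mono fun x hx => by
      by_contra hx0
      exact (phiDensity_strictMonoOn μ hx0 h₁ h₂ hl).ne hx
  simp only [Phi_eq_gradSq_sub_integral_phiDensity]
  linarith [lt_of_le_of_ne (integral_mono (hint l₁) (hint l₂) hle) hne]

lemma tendsto_Phi_nhdsGT_zero (μ : ℝ) (hφ : AEStronglyMeasurable φ volume)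
    (hexp : ExpIntegrable φ) :
    Tendsto (Phi μ φ) (𝓝[>] 0) (𝓝 (gradSq φ - 2 * π * (1 - μ) * ∫ x, ‖φ x‖ ^ 4)) := by
  have h := tendsto_integral_filter_of_dominated_convergence _
    (Eventually.of_forall fun l => (integrable_phiDensity hφ hexp μ l).aestronglyMeasurable)
    (by
      filter_upwards [Ioo_mem_nhdsGT zero_lt_one] with l hl
      exact ae_of_all _ fun x =>
        abs_phiDensity_le μ (φ x) (by rw [abs_of_pos hl.1]; exact hl.2.le))
    (integrable_phiDensity_bound hφ hexp μ 1)
    (ae_of_all _ fun x => tendsto_phiDensity_nhdsGT_zero μ (φ x))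
  rw [integral_const_mul] at h
  exact tendsto_const_nhds.sub h

end Fibering

lemma lt_of_hasDerivAt_mul_of_strictAntiOn {f g : ℝ → ℝ}
    (hf : ∀ x, 0 < x → HasDerivAt f (x * g x) x) (hg : StrictAntiOn g (Set.Ioi 0))
    {a : ℝ} (ha : 0 < a) (hga : g a = 0) {x : ℝ} (hx : 0 < x) (hxa : x ≠ a) : f x < f a := by
  have hcont {s : Set ℝ} (hs : s ⊆ Set.Ioi 0) : ContinuousOn f s :=
    fun t ht => (hf t (hs ht)).continuousAt.continuousWithinAt
  rcases hxa.lt_or_gt with h | h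
  · refine strictMonoOn_of_deriv_pos (convex_Icc x a)
      (hcont fun t ht => hx.trans_le ht.1) (fun t ht => ?_) ⟨le_rfl, h.le⟩ ⟨h.le, le_rfl⟩ h
    rw [interior_Icc] at ht
    have ht0 : 0 < t := hx.trans ht.1
    rw [(hf t ht0).deriv]
    exact mul_pos ht0 (hga ▸ hg ht0 ha ht.2)
  · refine strictAntiOn_of_deriv_neg (convex_Icc a x)
      (hcont fun t ht => ha.trans_le ht.1) (fun t ht => ?_) ⟨le_rfl, h.le⟩ ⟨h.le, le_rfl⟩ h
    rw [interior_Icc] at ht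
    have ht0 : 0 < t := ha.trans ht.1
    rw [(hf t ht0).deriv]
    exact mul_neg_of_pos_of_neg ht0 (hga ▸ hg ha ht0 ht.1)

theorem fibering_map_properties_general (μ : ℝ)
    (φ : E2 → ℂ) (hφmem : MemH1 φ) (hφexp : ExpIntegrable φ)
    (hφne : ¬ φ =ᵐ[volume] (0 : E2 → ℂ)) :
    -- (i) `∂_λ S_μ(φ_λ) = I_μ(φ_λ)/λ`
    (∀ l : ℝ, 0 < l →
      HasDerivAt (fun l' : ℝ => Smu μ (scl l' φ)) (Imu μ (scl l φ) / l) l) ∧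
    -- (ii) `I_μ(φ_λ) = λ² Φ_μ(λ)`
    (∀ l : ℝ, 0 < l → Imu μ (scl l φ) = l ^ 2 * Phi μ φ l) ∧
    -- `Φ_μ` is strictly decreasing on `(0,∞)`
    StrictAntiOn (Phi μ φ) (Set.Ioi (0 : ℝ)) ∧
    -- `Φ_μ(0⁺) = ‖∇φ‖² - 2π(1-μ)‖φ‖⁴_{L⁴}`
    Filter.Tendsto (Phi μ φ) (𝓝[>] (0 : ℝ))
      (𝓝 (gradSq φ - 2 * π * (1 - μ) * ∫ x : E2, ‖φ x‖ ^ 4)) ∧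
    -- if `Φ_μ(λ_μ) = 0` then `λ_μ` is unique and `λ ↦ S_μ(φ_λ)` has a strict maximum there
    (∀ lm : ℝ, 0 < lm → Phi μ φ lm = 0 →
      (∀ l : ℝ, 0 < l → Phi μ φ l = 0 → l = lm) ∧
      (∀ l : ℝ, 0 < l → l ≠ lm → Smu μ (scl l φ) < Smu μ (scl lm φ))) := by
  obtain ⟨hφ2, hdiff, -⟩ := hφmem
  have hmeas := hφ2.aestronglyMeasurable
  have hI (l : ℝ) := Imu_scl μ hdiff l
  have hS (l : ℝ) (hl : 0 < l) := hasDerivAt_Smu_scl μ hφ2 hdiff hφexp hl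
  have hanti := Phi_strictAntiOn μ hmeas hφexp hφne
  refine ⟨fun l hl => ?_, fun l _ => hI l, hanti, tendsto_Phi_nhdsGT_zero μ hmeas hφexp,
    fun lm hlm hlm0 => ⟨fun l hl hl0 => hanti.injOn hl hlm (hl0.trans hlm0.symm),
      fun l hl hne => lt_of_hasDerivAt_mul_of_strictAntiOn hS hanti hlm hlm0 hl hne⟩⟩
  refine (hS l hl).congr_deriv ?_
  rw [hI]
  field_simp

/-- properties of the fibering maps `λ ↦ S_μ(φ_λ)` and `λ ↦ I_μ(φ_λ)`. -/
theorem fibering_map_properties (μ : ℝ) (hμ : μ = 0 ∨ μ = 1)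
    (φ : E2 → ℂ) (hφmem : MemH1 φ) (hφexp : ExpIntegrable φ)
    (hφne : ¬ φ =ᵐ[volume] (0 : E2 → ℂ)) :
    -- (i) `∂_λ S_μ(φ_λ) = I_μ(φ_λ)/λ`
    (∀ l : ℝ, 0 < l →
      HasDerivAt (fun l' : ℝ => Smu μ (scl l' φ)) (Imu μ (scl l φ) / l) l) ∧
    -- (ii) `I_μ(φ_λ) = λ² Φ_μ(λ)`
    (∀ l : ℝ, 0 < l → Imu μ (scl l φ) = l ^ 2 * Phi μ φ l) ∧
    -- `Φ_μ` is strictly decreasing on `(0,∞)`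
    StrictAntiOn (Phi μ φ) (Set.Ioi (0 : ℝ)) ∧
    -- `Φ_μ(0⁺) = ‖∇φ‖² - 2π(1-μ)‖φ‖⁴_{L⁴}`
    Filter.Tendsto (Phi μ φ) (𝓝[>] (0 : ℝ))
      (𝓝 (gradSq φ - 2 * π * (1 - μ) * ∫ x : E2, ‖φ x‖ ^ 4)) ∧
    -- if `Φ_μ(λ_μ) = 0` then `λ_μ` is unique and `λ ↦ S_μ(φ_λ)` has a strict maximum there
    (∀ lm : ℝ, 0 < lm → Phi μ φ lm = 0 →
      (∀ l : ℝ, 0 < l → Phi μ φ l = 0 → l = lm) ∧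
      (∀ l : ℝ, 0 < l → l ≠ lm → Smu μ (scl l φ) < Smu μ (scl lm φ))) :=
  fibering_map_properties_general μ φ hφmem hφexp hφne
end
end
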